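/- arXiv:2208.06785 — 2 statements merged into one kernel-verified Lean document; each statement's English description precedes it below -/
import Mathlib

section
/- Let T be a predictable stopping time, β a strategy such that P_β is exchangeable, and q_n : S^n → [0,1] measurable functions. Define the strategy σ by σ_0 = β_0, σ_1 = β_1, and for n ≥ 1, x ∈ S^n, y ∈ S: σ_{n+1}(x, y) = β_{n+1}(x, y) if T > n+1 (an event depending only on x), and σ_{n+1}(x, y) = q_n(x) σ_n(x) + (1 − q_n(x)) δ_y if T ≤ n+1. Then the coordinate process X is conditionally identically distributed (c.i.d.) under P_σ. -/
/-!
The coordinate process is c.i.d. under a strategy `κ` as soon as, for every `k`, the pair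
`(X_{<k}, X_{k+1})` has the same law as `(X_{<k}, X_k)`; in kernel terms
`μ_k ⊗ κ_k⁽²⁾ = μ_k ⊗ κ_k`, where `μ_k` is the law of `X_{<k}` and
`κ_k⁽²⁾(x) = ∫ κ_{k+1}(x, y) κ_k(x, dy)` (`twoStepKernel κ k`) is the law of `X_{k+1}`
given `X_{<k} = x`.
For `β` this identity comes from exchangeability, by swapping the last two coordinates.
For `σ` one splits `Sᵏ` at the stopping time: before it `σ` and its finite-dimensional laws
agree with those of `β`, so the identity is inherited; after it
`σ_{k+1}(x, y) = q σ_k(x) + (1 - q) δ_y` integrates against `σ_k(x, dy)` back to `σ_k(x)`.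
-/

open MeasureTheory ProbabilityTheory

namespace PredictiveBayes

variable {S : Type*} [MeasurableSpace S]

/-- The finite-dimensional distributions determined by a strategy `κ`. -/
noncomputable def stratFDD (κ : ∀ n, Kernel (Fin n → S) S) : ∀ n, Measure (Fin n → S)
  | 0 => Measure.dirac (fun i : Fin 0 => i.elim0)
  | n + 1 => (stratFDD κ n).bind (fun x => ((κ n) x).map (Fin.snoc x))

/-- `P` is the Ionescu–Tulcea law `P_κ` of the strategy `κ`. -/
def IsStrategyLaw (κ : ∀ n, Kernel (Fin n → S) S) (P : Measure (ℕ → S)) : Prop :=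
  ∀ n, P.map (fun ω (i : Fin n) => ω i) = stratFDD κ n

/-- The process `Y` is conditionally identically distributed (c.i.d.) under `P`. -/
def CID {Ω : Type*} [MeasurableSpace Ω] (P : Measure Ω) (Y : ℕ → Ω → S) : Prop :=
  P.map (Y 1) = P.map (Y 0) ∧
  ∀ n m : ℕ, 1 ≤ n → n ≤ m → ∀ A : Set S, MeasurableSet A →
    (P[Set.indicator ((Y m) ⁻¹' A) (fun _ => (1 : ℝ)) |
        MeasurableSpace.comap (fun ω (i : Fin n) => Y i ω) inferInstance])
      =ᵐ[P]
    (P[Set.indicator ((Y n) ⁻¹' A) (fun _ => (1 : ℝ)) |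
        MeasurableSpace.comap (fun ω (i : Fin n) => Y i ω) inferInstance])

/-- The process `Y` is exchangeable under `P`. -/
def Exchangeable {Ω : Type*} [MeasurableSpace Ω] (P : Measure Ω) (Y : ℕ → Ω → S) : Prop :=
  ∀ (n : ℕ) (e : Equiv.Perm (Fin n)),
    P.map (fun ω (i : Fin n) => Y (e i) ω) = P.map (fun ω (i : Fin n) => Y i ω)

/-- Given the sets `A n` with `{T = n+1} = {(x_1,…,x_n) ∈ A n}` for the predictable
stopping time `T`, `stoppedBy A n x` says that `T ≤ n + 1` on the cylinder determined
by the first `n` coordinates `x ∈ Sⁿ` (equivalently, `T = j + 1` for some `1 ≤ j ≤ n`). -/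
def stoppedBy (A : ∀ n, Set (Fin n → S)) (n : ℕ) (x : Fin n → S) : Prop :=
  ∃ j : Fin n,
    (fun i : Fin ((j : ℕ) + 1) => x (Fin.castLE (by have := j.isLt; omega) i)) ∈ A ((j : ℕ) + 1)

end PredictiveBayes

namespace MeasureTheory.Measure

variable {α β γ : Type*} [MeasurableSpace α] [MeasurableSpace β] [MeasurableSpace γ]

lemma compProd_restrict_left (μ : Measure α) [SFinite μ] (κ : Kernel α β) [IsSFiniteKernel κ]
    {U : Set α} (hU : MeasurableSet U) :
    μ.restrict U ⊗ₘ κ = (μ ⊗ₘ κ).restrict (U ×ˢ Set.univ) := by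
  ext s hs
  rw [restrict_apply hs, compProd_apply hs, compProd_apply (hs.inter (hU.prod .univ)),
    ← lintegral_indicator hU]
  congr with x
  by_cases hx : x ∈ U <;> simp [hx, Set.preimage, Set.indicator]

lemma restrict_prod_univ_compProd_congr {μ ν : Measure α} [SFinite μ] [SFinite ν]
    {κ η : Kernel α β} [IsSFiniteKernel κ] [IsSFiniteKernel η] {U : Set α} (hU : MeasurableSet U)
    (hμν : μ.restrict U = ν.restrict U) (hκη : ∀ x ∈ U, κ x = η x) :
    (μ ⊗ₘ κ).restrict (U ×ˢ Set.univ) = (ν ⊗ₘ η).restrict (U ×ˢ Set.univ) := by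
  rw [← compProd_restrict_left _ _ hU, ← compProd_restrict_left _ _ hU, hμν]
  exact compProd_congr (ae_restrict_of_forall_mem hU hκη)

lemma map_compProd (μ : Measure γ) [SFinite μ] (κ : Kernel α β) [IsSFiniteKernel κ]
    {f : γ → α} (hf : Measurable f) :
    μ.map f ⊗ₘ κ = (μ ⊗ₘ κ.comap f hf).map (Prod.map f id) := by
  ext s hs
  rw [map_apply (hf.prodMap measurable_id) hs, compProd_apply hs,
    compProd_apply (hs.preimage (hf.prodMap measurable_id)),
    lintegral_map (Kernel.measurable_kernel_prodMk_left hs) hf]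
  rfl

lemma map_compProd_compProd_fst_snd (μ : Measure α) [SFinite μ] (κ : Kernel α β)
    [IsSFiniteKernel κ] (η : Kernel (α × β) γ) [IsSFiniteKernel η] :
    (μ ⊗ₘ κ ⊗ₘ η).map (fun p => (p.1.1, p.2)) = μ ⊗ₘ Kernel.snd (κ ⊗ₖ η) := by
  rw [← compProd_assoc, map_map (by fun_prop) (MeasurableEquiv.measurable _), Kernel.snd_eq,
    compProd_map measurable_snd]
  rfl

end MeasureTheory.Measure

namespace PredictiveBayes

variable {S : Type*}

def snocPair {n : ℕ} (p : (Fin n → S) × S) : Fin (n + 1) → S := Fin.snoc p.1 p.2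

@[simp] lemma init_snocPair {n : ℕ} (p : (Fin n → S) × S) : Fin.init (snocPair p) = p.1 :=
  Fin.init_snoc _ _

@[simp] lemma snocPair_last {n : ℕ} (p : (Fin n → S) × S) : snocPair p (Fin.last n) = p.2 :=
  Fin.snoc_last _ _

lemma stoppedBy_of_init {A : ∀ n, Set (Fin n → S)} {n : ℕ} {w : Fin (n + 1) → S}
    (h : stoppedBy A n (Fin.init w)) : stoppedBy A (n + 1) w := by
  obtain ⟨j, hj⟩ := h
  exact ⟨j.castSucc, hj⟩

variable [MeasurableSpace S]

@[fun_prop] lemma measurable_snocPair {n : ℕ} : Measurable (snocPair : (Fin n → S) × S → _) := by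
  refine measurable_pi_lambda _ fun i => ?_
  induction i using Fin.lastCases with
  | last => simpa [snocPair] using measurable_snd
  | cast j => simpa [snocPair, Function.comp_def] using (measurable_pi_apply j).comp measurable_fst

lemma measurable_snoc {n : ℕ} (x : Fin n → S) : Measurable (Fin.snoc (α := fun _ => S) x) :=
  measurable_snocPair.comp measurable_prodMk_left

@[fun_prop] lemma measurable_init {n : ℕ} : Measurable (Fin.init : (Fin (n + 1) → S) → _) :=
  measurable_pi_lambda _ fun _ => measurable_pi_apply _

lemma measurable_finPrefix {Ω : Type*} [MeasurableSpace Ω] {Y : ℕ → Ω → S}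
    (hY : ∀ n, Measurable (Y n)) (k : ℕ) : Measurable (fun ω (i : Fin k) => Y i ω) :=
  measurable_pi_iff.mpr fun i => hY i

lemma measurable_map_snoc {n : ℕ} (κ : Kernel (Fin n → S) S) [IsSFiniteKernel κ] :
    Measurable (fun x => (κ x).map (Fin.snoc (α := fun _ => S) x)) := by
  rw [Measure.measurable_measure]
  intro s hs
  simp_rw [Measure.map_apply (measurable_snoc _) hs]
  exact Kernel.measurable_kernel_prodMk_left (measurable_snocPair hs)

instance isProbabilityMeasure_stratFDD (κ : ∀ n, Kernel (Fin n → S) S)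
    [∀ n, IsMarkovKernel (κ n)] (n : ℕ) : IsProbabilityMeasure (stratFDD κ n) := by
  induction n with
  | zero => exact Measure.dirac.isProbabilityMeasure
  | succ n ih =>
    constructor
    rw [stratFDD, Measure.bind_apply .univ (measurable_map_snoc (κ n)).aemeasurable]
    simp [Measure.map_apply (measurable_snoc _) .univ]

lemma stratFDD_succ (κ : ∀ n, Kernel (Fin n → S) S) [∀ n, IsMarkovKernel (κ n)] (n : ℕ) :
    stratFDD κ (n + 1) = (stratFDD κ n ⊗ₘ κ n).map snocPair := by
  ext s hs
  rw [stratFDD, Measure.bind_apply hs (measurable_map_snoc (κ n)).aemeasurable,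
    Measure.map_apply measurable_snocPair hs, Measure.compProd_apply (measurable_snocPair hs)]
  simp_rw [Measure.map_apply (measurable_snoc _) hs]
  rfl

noncomputable def twoStepKernel (κ : ∀ n, Kernel (Fin n → S) S) (k : ℕ) :
    Kernel (Fin k → S) S :=
  Kernel.snd (κ k ⊗ₖ (κ (k + 1)).comap snocPair measurable_snocPair)

instance (κ : ∀ n, Kernel (Fin n → S) S) [∀ n, IsMarkovKernel (κ n)] (k : ℕ) :
    IsMarkovKernel (twoStepKernel κ k) := by
  rw [twoStepKernel]; infer_instance

lemma twoStepKernel_apply (κ : ∀ n, Kernel (Fin n → S) S) [∀ n, IsMarkovKernel (κ n)] (k : ℕ)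
    (x : Fin k → S) {t : Set S} (ht : MeasurableSet t) :
    twoStepKernel κ k x t = ∫⁻ y, κ (k + 1) (snocPair (x, y)) t ∂(κ k x) := by
  rw [twoStepKernel, Kernel.snd_apply' _ _ ht, Kernel.compProd_apply (measurable_snd ht)]
  rfl

namespace IsStrategyLaw

variable {κ : ∀ n, Kernel (Fin n → S) S} [∀ n, IsMarkovKernel (κ n)] {P : Measure (ℕ → S)}

lemma map_prefix_last (hP : IsStrategyLaw κ P) (k : ℕ) :
    P.map (fun ω => ((fun i : Fin k => ω i), ω k)) = stratFDD κ k ⊗ₘ κ k := by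
  have hlast : Measurable (fun w : Fin (k + 1) → S => (Fin.init w, w (Fin.last k))) := by
    fun_prop
  calc P.map (fun ω => ((fun i : Fin k => ω i), ω k))
      = (P.map (fun ω (i : Fin (k + 1)) => ω i)).map (fun w => (Fin.init w, w (Fin.last k))) := by
        rw [Measure.map_map hlast (measurable_finPrefix measurable_pi_apply _)]; rfl
    _ = stratFDD κ k ⊗ₘ κ k := by
        rw [hP, stratFDD_succ, Measure.map_map hlast measurable_snocPair]
        simp [Function.comp_def]

lemma map_prefix_twoStep (hP : IsStrategyLaw κ P) (k : ℕ) :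
    P.map (fun ω => ((fun i : Fin k => ω i), ω (k + 1))) = stratFDD κ k ⊗ₘ twoStepKernel κ k := by
  calc P.map (fun ω => ((fun i : Fin k => ω i), ω (k + 1)))
      = (P.map (fun ω => ((fun i : Fin (k + 1) => ω i), ω (k + 1)))).map
          (Prod.map Fin.init id) := by
        rw [Measure.map_map (by fun_prop) (by fun_prop)]; rfl
    _ = ((stratFDD κ k ⊗ₘ κ k ⊗ₘ (κ (k + 1)).comap snocPair measurable_snocPair).map
          (Prod.map snocPair id)).map (Prod.map Fin.init id) := by
        rw [hP.map_prefix_last, stratFDD_succ, Measure.map_compProd]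
    _ = stratFDD κ k ⊗ₘ twoStepKernel κ k := by
        rw [Measure.map_map (by fun_prop) (by fun_prop), twoStepKernel,
          ← Measure.map_compProd_compProd_fst_snd]
        congr 1
        ext p <;> simp

end IsStrategyLaw

section JointLaws

variable {Ω : Type*} [MeasurableSpace Ω] {P : Measure Ω} {Y : ℕ → Ω → S}

lemma Exchangeable.map_prefix_succ_eq (hY : ∀ n, Measurable (Y n)) (hP : Exchangeable P Y)
    (k : ℕ) :
    P.map (fun ω => ((fun i : Fin k => Y i ω), Y (k + 1) ω))
      = P.map (fun ω => ((fun i : Fin k => Y i ω), Y k ω)) := by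
  let e : Equiv.Perm (Fin (k + 2)) := Equiv.swap (Fin.last (k + 1)) ⟨k, by omega⟩
  let g : (Fin (k + 2) → S) → (Fin k → S) × S :=
    fun w => (fun i => w (Fin.castLE (by omega) i), w (Fin.last (k + 1)))
  have hg : Measurable g := by fun_prop
  have hge : g ∘ (fun ω (i : Fin (k + 2)) => Y (e i) ω)
      = fun ω => ((fun i : Fin k => Y i ω), Y k ω) := by
    funext ω
    refine Prod.ext (funext fun i => ?_) (by simp [g, e])
    simp only [Function.comp_apply, g, e]
    rw [Equiv.swap_apply_of_ne_of_ne] <;> simp [Fin.ext_iff, Fin.val_last] <;> omega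
  calc P.map (fun ω => ((fun i : Fin k => Y i ω), Y (k + 1) ω))
      = (P.map (fun ω (i : Fin (k + 2)) => Y i ω)).map g := by
        rw [Measure.map_map hg (measurable_finPrefix hY _)]; rfl
    _ = P.map (fun ω => ((fun i : Fin k => Y i ω), Y k ω)) := by
        rw [← hP, Measure.map_map hg (measurable_pi_iff.mpr fun i => hY _), hge]

lemma map_prefix_eq_map_castLE (hY : ∀ n, Measurable (Y n)) {n m : ℕ} (hnm : n ≤ m) (j : ℕ) :
    P.map (fun ω => ((fun i : Fin n => Y i ω), Y j ω))
      = (P.map (fun ω => ((fun i : Fin m => Y i ω), Y j ω))).map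
          (Prod.map (fun x i => x (Fin.castLE hnm i)) id) := by
  rw [Measure.map_map (by fun_prop) ((measurable_finPrefix hY m).prodMk (hY j))]; rfl

lemma map_prefix_eq_of_succ_eq (hY : ∀ n, Measurable (Y n))
    (h : ∀ k, P.map (fun ω => ((fun i : Fin k => Y i ω), Y (k + 1) ω))
      = P.map (fun ω => ((fun i : Fin k => Y i ω), Y k ω)))
    {n m : ℕ} (hnm : n ≤ m) :
    P.map (fun ω => ((fun i : Fin n => Y i ω), Y m ω))
      = P.map (fun ω => ((fun i : Fin n => Y i ω), Y n ω)) := by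
  induction m, hnm using Nat.le_induction with
  | base => rfl
  | succ m hnm ih =>
    rw [map_prefix_eq_map_castLE hY hnm, h, ← map_prefix_eq_map_castLE hY hnm, ih]

lemma condExp_indicator_eq_of_map_eq [IsFiniteMeasure P] {E : Type*} [MeasurableSpace E]
    {Z : Ω → E} {V W : Ω → S} (hZ : Measurable Z) (hV : Measurable V) (hW : Measurable W)
    (h : P.map (fun ω => (Z ω, V ω)) = P.map (fun ω => (Z ω, W ω)))
    {A : Set S} (hA : MeasurableSet A) :
    P[(V ⁻¹' A).indicator (fun _ => (1 : ℝ)) | MeasurableSpace.comap Z inferInstance]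
      =ᵐ[P] P[(W ⁻¹' A).indicator (fun _ => (1 : ℝ)) | MeasurableSpace.comap Z inferInstance] := by
  have hle := hZ.comap_le
  have hsets : ∀ B, MeasurableSet B → P (Z ⁻¹' B ∩ V ⁻¹' A) = P (Z ⁻¹' B ∩ W ⁻¹' A) :=
    fun B hB => calc
      P (Z ⁻¹' B ∩ V ⁻¹' A) = P.map (fun ω => (Z ω, V ω)) (B ×ˢ A) :=
        (Measure.map_apply (hZ.prodMk hV) (hB.prod hA)).symm
      _ = P.map (fun ω => (Z ω, W ω)) (B ×ˢ A) := by rw [h]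
      _ = P (Z ⁻¹' B ∩ W ⁻¹' A) := Measure.map_apply (hZ.prodMk hW) (hB.prod hA)
  refine (ae_eq_condExp_of_forall_setIntegral_eq hle
    ((integrable_const 1).indicator (hV hA)) (fun s _ _ => integrable_condExp.integrableOn)
    (fun s hs _ => ?_) stronglyMeasurable_condExp.aestronglyMeasurable).symm
  obtain ⟨B, hB, rfl⟩ := hs
  rw [setIntegral_condExp hle ((integrable_const 1).indicator (hW hA)) ⟨B, hB, rfl⟩,
    setIntegral_indicator (hW hA), setIntegral_indicator (hV hA)]
  simp [measureReal_def, hsets B hB]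

lemma cid_of_map_prefix_succ_eq [IsFiniteMeasure P] (hY : ∀ n, Measurable (Y n))
    (h : ∀ k, P.map (fun ω => ((fun i : Fin k => Y i ω), Y (k + 1) ω))
      = P.map (fun ω => ((fun i : Fin k => Y i ω), Y k ω))) :
    CID P Y := by
  refine ⟨?_, fun n m _ hnm A hA => ?_⟩
  · have h0 := congrArg (Measure.map Prod.snd) (h 0)
    rwa [Measure.map_map measurable_snd (by fun_prop),
      Measure.map_map measurable_snd (by fun_prop)] at h0
  · exact condExp_indicator_eq_of_map_eq (measurable_finPrefix hY n) (hY m) (hY n)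
      (map_prefix_eq_of_succ_eq hY h hnm) hA

end JointLaws

lemma twoStepKernel_apply_eq_of_mixture (κ : ∀ n, Kernel (Fin n → S) S)
    [∀ n, IsMarkovKernel (κ n)] {k : ℕ} (x : Fin k → S) {q : ℝ} (hq : q ∈ Set.Icc (0 : ℝ) 1)
    (hmix : ∀ y, κ (k + 1) (snocPair (x, y))
      = ENNReal.ofReal q • κ k x + ENNReal.ofReal (1 - q) • Measure.dirac y) :
    twoStepKernel κ k x = κ k x := by
  ext t ht
  have hsum : ENNReal.ofReal q + ENNReal.ofReal (1 - q) = 1 := by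
    rw [← ENNReal.ofReal_add hq.1 (by linarith [hq.2])]; simp
  simp_rw [twoStepKernel_apply κ k x ht, hmix, Measure.add_apply, Measure.smul_apply,
    smul_eq_mul, Measure.dirac_apply' _ ht]
  rw [lintegral_add_left (by fun_prop), lintegral_const, lintegral_const_mul _ (by fun_prop),
    lintegral_indicator_one ht]
  simp only [measure_univ, mul_one]
  rw [← add_mul, hsum, one_mul]

section ChangePoint

variable {A : ∀ n, Set (Fin n → S)}

lemma measurableSet_not_stoppedBy (hA : ∀ n, MeasurableSet (A n)) (n : ℕ) :
    MeasurableSet {x : Fin n → S | ¬ stoppedBy A n x} := by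
  have : {x : Fin n → S | stoppedBy A n x} = ⋃ j : Fin n,
      (fun (x : Fin n → S) (i : Fin (j + 1)) => x (Fin.castLE (by omega) i)) ⁻¹' A (j + 1) := by
    ext x; simp [stoppedBy]
  refine MeasurableSet.compl (s := {x | stoppedBy A n x}) ?_
  rw [this]
  exact .iUnion fun j => measurable_pi_iff.mpr (fun _ => measurable_pi_apply _) (hA _)

def EqUntilStopped (A : ∀ n, Set (Fin n → S)) (β κ : ∀ n, Kernel (Fin n → S) S) : Prop :=
  κ 0 = β 0 ∧ ∀ k (w : Fin (k + 1) → S), ¬ stoppedBy A k (Fin.init w) → κ (k + 1) w = β (k + 1) w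

namespace EqUntilStopped

variable {β κ : ∀ n, Kernel (Fin n → S) S}

lemma apply_eq (h : EqUntilStopped A β κ) {k : ℕ} {x : Fin k → S} (hx : ¬ stoppedBy A k x) :
    κ k x = β k x := by
  cases k with
  | zero => rw [h.1]
  | succ k => exact h.2 k x fun hinit => hx (stoppedBy_of_init hinit)

variable [∀ n, IsMarkovKernel (β n)] [∀ n, IsMarkovKernel (κ n)]

lemma twoStepKernel_apply_eq (h : EqUntilStopped A β κ) {k : ℕ} {x : Fin k → S}
    (hx : ¬ stoppedBy A k x) : twoStepKernel κ k x = twoStepKernel β k x := by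
  ext t ht
  rw [twoStepKernel_apply κ k x ht, twoStepKernel_apply β k x ht, h.apply_eq hx]
  congr with y
  rw [h.2 k _ (by rwa [init_snocPair])]

lemma restrict_stratFDD_eq (h : EqUntilStopped A β κ) (hA : ∀ n, MeasurableSet (A n)) (k : ℕ) :
    (stratFDD κ k).restrict {x | ¬ stoppedBy A k x}
      = (stratFDD β k).restrict {x | ¬ stoppedBy A k x} := by
  induction k with
  | zero => rfl
  | succ k ih =>
    have hsub : snocPair ⁻¹' {w | ¬ stoppedBy A (k + 1) w}
        ⊆ {x | ¬ stoppedBy A k x} ×ˢ Set.univ := fun p hp =>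
      ⟨fun hstop => hp (stoppedBy_of_init (by rwa [init_snocPair])), trivial⟩
    have hU := measurableSet_not_stoppedBy hA (k + 1)
    rw [stratFDD_succ, stratFDD_succ, Measure.restrict_map measurable_snocPair hU,
      Measure.restrict_map measurable_snocPair hU, ← Measure.restrict_restrict_of_subset hsub,
      Measure.restrict_prod_univ_compProd_congr (measurableSet_not_stoppedBy hA k) ih
        fun _ hx => h.apply_eq hx, Measure.restrict_restrict_of_subset hsub]

lemma compProd_twoStepKernel_eq (h : EqUntilStopped A β κ) (hA : ∀ n, MeasurableSet (A n))
    (hstop : ∀ k x, stoppedBy A k x → twoStepKernel κ k x = κ k x)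
    (hβ : ∀ k, stratFDD β k ⊗ₘ twoStepKernel β k = stratFDD β k ⊗ₘ β k) (k : ℕ) :
    stratFDD κ k ⊗ₘ twoStepKernel κ k = stratFDD κ k ⊗ₘ κ k := by
  have hU := measurableSet_not_stoppedBy hA k
  have hμ := h.restrict_stratFDD_eq hA k
  rw [← Measure.restrict_add_restrict_compl (μ := stratFDD κ k) hU, Measure.compProd_add_left,
    Measure.compProd_add_left]
  congr 1
  · rw [Measure.compProd_restrict_left _ _ hU, Measure.compProd_restrict_left _ _ hU,
      Measure.restrict_prod_univ_compProd_congr hU hμ fun _ hx => h.twoStepKernel_apply_eq hx, hβ,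
      ← Measure.restrict_prod_univ_compProd_congr hU hμ fun _ hx => h.apply_eq hx]
  · exact Measure.compProd_congr
      (ae_restrict_of_forall_mem hU.compl fun x hx => hstop k x (not_not.mp hx))

end EqUntilStopped

end ChangePoint

theorem changePoint_cid_general {S : Type*} [MeasurableSpace S]
    (β κ : ∀ n, Kernel (Fin n → S) S) [∀ n, IsMarkovKernel (β n)] [∀ n, IsMarkovKernel (κ n)]
    (A : ∀ n, Set (Fin n → S)) (hAmeas : ∀ n, MeasurableSet (A n))
    (q : ∀ n, (Fin n → S) → ℝ)
    (hq01 : ∀ n x, q n x ∈ Set.Icc (0 : ℝ) 1)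
    (hκ0 : κ 0 = β 0) (hκ1 : κ 1 = β 1)
    (hκ_before : ∀ n : ℕ, 1 ≤ n → ∀ w : Fin (n + 1) → S,
      ¬ stoppedBy A n (Fin.init w) → κ (n + 1) w = β (n + 1) w)
    (hκ_after : ∀ n : ℕ, 1 ≤ n → ∀ w : Fin (n + 1) → S,
      stoppedBy A n (Fin.init w) →
        κ (n + 1) w = ENNReal.ofReal (q n (Fin.init w)) • κ n (Fin.init w) +
          ENNReal.ofReal (1 - q n (Fin.init w)) • Measure.dirac (w (Fin.last n)))
    (Q : Measure (ℕ → S)) (hQ : IsStrategyLaw β Q)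
    (hQexch : Exchangeable Q (fun n ω => ω n))
    (P : Measure (ℕ → S)) [IsProbabilityMeasure P] (hP : IsStrategyLaw κ P) :
    CID P (fun n ω => ω n) := by
  have hagree : EqUntilStopped A β κ := by
    refine ⟨hκ0, fun k w hw => ?_⟩
    cases k with
    | zero => rw [hκ1]
    | succ k => exact hκ_before (k + 1) (by omega) w hw
  have hstop : ∀ k x, stoppedBy A k x → twoStepKernel κ k x = κ k x := by
    rintro (_ | k) x hx
    · exact hx.elim fun j _ => j.elim0
    · refine twoStepKernel_apply_eq_of_mixture κ x (hq01 _ x) fun y => ?_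
      simpa using hκ_after (k + 1) (by omega) (snocPair (x, y)) (by simpa using hx)
  have hβ : ∀ k, stratFDD β k ⊗ₘ twoStepKernel β k = stratFDD β k ⊗ₘ β k := fun k => by
    rw [← hQ.map_prefix_twoStep, ← hQ.map_prefix_last]
    exact hQexch.map_prefix_succ_eq (fun n => measurable_pi_apply n) k
  refine cid_of_map_prefix_succ_eq (fun n => measurable_pi_apply n) fun k => ?_
  rw [hP.map_prefix_twoStep, hP.map_prefix_last]
  exact hagree.compProd_twoStepKernel_eq hAmeas hstop hβ k

/-- **Theorem (change points).** Let `T` be a predictable stopping time (with values in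
`{2, 3, …, ∞}`), `β` a strategy whose Ionescu–Tulcea law is exchangeable, and
`q_n : Sⁿ → [0,1]` measurable. Define the strategy `σ` (here `κ`) by `σ_0 = β_0`,
`σ_1 = β_1` and, for `n ≥ 1`, `σ_{n+1}(x, y) = β_{n+1}(x, y)` if `T > n + 1`, while
`σ_{n+1}(x, y) = q_n(x) σ_n(x) + (1 - q_n(x)) δ_y` if `T ≤ n + 1`. Then the coordinate
process is c.i.d. under `P_σ`. -/
theorem changePoint_cid {S : Type*} [MeasurableSpace S] [StandardBorelSpace S] [Nonempty S]
    (β κ : ∀ n, Kernel (Fin n → S) S) [∀ n, IsMarkovKernel (β n)] [∀ n, IsMarkovKernel (κ n)]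
    (T : (ℕ → S) → ℕ∞) (hT2 : ∀ ω, 2 ≤ T ω)
    (A : ∀ n, Set (Fin n → S)) (hAmeas : ∀ n, MeasurableSet (A n))
    (hTA : ∀ n : ℕ, 1 ≤ n →
      {ω : ℕ → S | T ω = ((n + 1 : ℕ) : ℕ∞)} = {ω : ℕ → S | (fun i : Fin n => ω i) ∈ A n})
    (q : ∀ n, (Fin n → S) → ℝ) (hqmeas : ∀ n, Measurable (q n))
    (hq01 : ∀ n x, q n x ∈ Set.Icc (0 : ℝ) 1)
    (hκ0 : κ 0 = β 0) (hκ1 : κ 1 = β 1)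
    (hκ_before : ∀ n : ℕ, 1 ≤ n → ∀ w : Fin (n + 1) → S,
      ¬ stoppedBy A n (Fin.init w) → κ (n + 1) w = β (n + 1) w)
    (hκ_after : ∀ n : ℕ, 1 ≤ n → ∀ w : Fin (n + 1) → S,
      stoppedBy A n (Fin.init w) →
        κ (n + 1) w = ENNReal.ofReal (q n (Fin.init w)) • κ n (Fin.init w) +
          ENNReal.ofReal (1 - q n (Fin.init w)) • Measure.dirac (w (Fin.last n)))
    (Q : Measure (ℕ → S)) [IsProbabilityMeasure Q] (hQ : IsStrategyLaw β Q)
    (hQexch : Exchangeable Q (fun n ω => ω n))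
    (P : Measure (ℕ → S)) [IsProbabilityMeasure P] (hP : IsStrategyLaw κ P) :
    CID P (fun n ω => ω n) :=
  changePoint_cid_general β κ A hAmeas q hq01 hκ0 hκ1 hκ_before hκ_after Q hQ hQexch P hP

end PredictiveBayes
end

section
/- Let ν be a probability measure on (S, B) and, for each n ≥ 0, let q_n : S^n → [0,1] be measurable (q_0 constant). Define the recursive strategy σ by σ_0 = ν and σ_{n+1}(x, y) = q_n(x) σ_n(x) + (1 − q_n(x)) δ_y for all n ≥ 0, x ∈ S^n and y ∈ S. Then the coordinate process X is conditionally identically distributed (c.i.d.) under P_σ. -/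
/-! The predictive probabilities `π_n(A) = κ n (X_0, …, X_{n-1}) A` form a martingale under `P_κ`
as soon as averaging `κ (n+1) (x, y) A` over `y ∼ κ n x` gives back `κ n x A`. Then
`P(X_m ∈ A | X_0, …, X_{n-1}) = E[π_m(A) | X_0, …, X_{n-1}] = π_n(A)` for every `m ≥ n`, which is
the c.i.d. property. The recursive update has this averaging property because `δ_y` averages to
`κ n x` itself, while the summand `q_n(x) κ n x` does not depend on `y`. -/

open MeasureTheory ProbabilityTheory
open scoped ENNReal

namespace PredictiveBayes

variable {S : Type*} [MeasurableSpace S]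

lemma measurable_snoc_s13 {n : ℕ} :
    Measurable fun p : (Fin n → S) × S => (Fin.snoc p.1 p.2 : Fin (n + 1) → S) := by
  have h : (fun p : (Fin n → S) × S => (Fin.snoc p.1 p.2 : Fin (n + 1) → S)) =
      (MeasurableEquiv.piFinSuccAbove (fun _ => S) (Fin.last n)).symm ∘ Prod.swap := by
    ext p : 1
    simp [Fin.snocEquiv]
  rw [h]
  exact (MeasurableEquiv.measurable _).comp measurable_swap

lemma measurable_snoc_left {n : ℕ} (w : Fin n → S) :
    Measurable fun y : S => (Fin.snoc w y : Fin (n + 1) → S) :=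
  measurable_snoc_s13.comp measurable_prodMk_left

lemma lintegral_stratFDD_succ (κ : ∀ n, Kernel (Fin n → S) S) [∀ n, IsSFiniteKernel (κ n)]
    (n : ℕ) {f : (Fin (n + 1) → S) → ℝ≥0∞} (hf : Measurable f) :
    ∫⁻ v, f v ∂stratFDD κ (n + 1) = ∫⁻ w, ∫⁻ y, f (Fin.snoc w y) ∂κ n w ∂stratFDD κ n := by
  have hmap : Measurable fun w => (κ n w).map (Fin.snoc (α := fun _ => S) w) := by
    refine Measure.measurable_of_measurable_coe _ fun s hs => ?_
    simp_rw [Measure.map_apply (measurable_snoc_left _) hs]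
    exact Kernel.measurable_kernel_prodMk_left (measurable_snoc_s13 hs)
  rw [stratFDD, Measure.lintegral_bind hmap.aemeasurable hf.aemeasurable]
  exact lintegral_congr fun w => lintegral_map hf (measurable_snoc_left w)

def IsPredictiveMartingale (κ : ∀ n, Kernel (Fin n → S) S) : Prop :=
  ∀ n (w : Fin n → S) (A : Set S), MeasurableSet A →
    ∫⁻ y, κ (n + 1) (Fin.snoc w y) A ∂κ n w = κ n w A

section StrategyLaw

variable {κ : ∀ n, Kernel (Fin n → S) S} {P : Measure (ℕ → S)}

lemma lintegral_comp_restrict (hP : IsStrategyLaw κ P) {n : ℕ} {f : (Fin n → S) → ℝ≥0∞}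
    (hf : Measurable f) :
    ∫⁻ ω, f (fun i : Fin n => ω i) ∂P = ∫⁻ v, f v ∂stratFDD κ n := by
  rw [← hP n, lintegral_map hf (by fun_prop)]

lemma lintegral_comp_restrict_coord [∀ n, IsSFiniteKernel (κ n)] (hP : IsStrategyLaw κ P)
    {n : ℕ} {f : (Fin n → S) → S → ℝ≥0∞} (hf : Measurable (Function.uncurry f)) :
    ∫⁻ ω, f (fun i : Fin n => ω i) (ω n) ∂P =
      ∫⁻ ω, ∫⁻ y, f (fun i : Fin n => ω i) y ∂κ n (fun i : Fin n => ω i) ∂P := by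
  have hlast : Measurable fun v : Fin (n + 1) → S => f (Fin.init v) (v (Fin.last n)) :=
    hf.comp (f := fun v : Fin (n + 1) → S => (Fin.init v, v (Fin.last n)))
      ((measurable_pi_lambda _ fun i => measurable_pi_apply _).prodMk (measurable_pi_apply _))
  calc ∫⁻ ω, f (fun i : Fin n => ω i) (ω n) ∂P
      = ∫⁻ v, f (Fin.init v) (v (Fin.last n)) ∂stratFDD κ (n + 1) :=
        lintegral_comp_restrict hP hlast
    _ = ∫⁻ w, ∫⁻ y, f w y ∂κ n w ∂stratFDD κ n := by
        simp only [lintegral_stratFDD_succ κ n hlast, Fin.init_snoc, Fin.snoc_last]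
    _ = _ := (lintegral_comp_restrict hP hf.lintegral_kernel_prod_right).symm

lemma lintegral_mul_indicator_coord [∀ n, IsSFiniteKernel (κ n)] (hP : IsStrategyLaw κ P)
    {m : ℕ} {h : (Fin m → S) → ℝ≥0∞} (hh : Measurable h) {A : Set S} (hA : MeasurableSet A) :
    ∫⁻ ω, h (fun i : Fin m => ω i) * A.indicator 1 (ω m) ∂P =
      ∫⁻ ω, h (fun i : Fin m => ω i) * κ m (fun i : Fin m => ω i) A ∂P := by
  rw [lintegral_comp_restrict_coord (f := fun w y => h w * A.indicator 1 y) hP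
    ((hh.comp measurable_fst).mul ((measurable_one.indicator hA).comp measurable_snd))]
  simp only [lintegral_const_mul _ (measurable_one.indicator hA), lintegral_indicator_one hA]

lemma IsPredictiveMartingale.lintegral_mul_succ [∀ n, IsSFiniteKernel (κ n)]
    (hκ : IsPredictiveMartingale κ) (hP : IsStrategyLaw κ P)
    {m : ℕ} {h : (Fin m → S) → ℝ≥0∞} (hh : Measurable h) {A : Set S} (hA : MeasurableSet A) :
    ∫⁻ ω, h (fun i : Fin m => ω i) * κ (m + 1) (fun i : Fin (m + 1) => ω i) A ∂P =
      ∫⁻ ω, h (fun i : Fin m => ω i) * κ m (fun i : Fin m => ω i) A ∂P := by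
  have hsnoc (ω : ℕ → S) : (fun i : Fin (m + 1) => ω i) = Fin.snoc (fun i : Fin m => ω i) (ω m) :=
    (Fin.snoc_init_self _).symm
  refine (lintegral_congr fun ω => by rw [hsnoc ω]).trans ?_
  rw [lintegral_comp_restrict_coord (f := fun w y => h w * κ (m + 1) (Fin.snoc w y) A) hP
    ((hh.comp measurable_fst).mul ((κ (m + 1)).measurable_coe hA |>.comp measurable_snoc_s13))]
  refine lintegral_congr fun ω => ?_
  rw [lintegral_const_mul _ ?_, hκ _ _ _ hA]
  exact (κ (m + 1)).measurable_coe hA |>.comp (measurable_snoc_left _)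

lemma IsPredictiveMartingale.measure_restrict_inter_coord_eq [∀ n, IsSFiniteKernel (κ n)]
    (hκ : IsPredictiveMartingale κ) (hP : IsStrategyLaw κ P) {n m : ℕ} (hnm : n ≤ m)
    {B : Set (Fin n → S)} (hB : MeasurableSet B) {A : Set S} (hA : MeasurableSet A) :
    P ((fun ω (i : Fin n) => ω i) ⁻¹' B ∩ (fun ω => ω m) ⁻¹' A) =
      P ((fun ω (i : Fin n) => ω i) ⁻¹' B ∩ (fun ω => ω n) ⁻¹' A) := by
  have hB' {k : ℕ} (hnk : n ≤ k) :
      Measurable fun w : Fin k → S =>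
        (B.indicator 1 (fun i : Fin n => w (Fin.castLE hnk i)) : ℝ≥0∞) :=
    (measurable_one.indicator hB).comp (by fun_prop)
  have hind (k : ℕ) : P ((fun ω (i : Fin n) => ω i) ⁻¹' B ∩ (fun ω => ω k) ⁻¹' A) =
      ∫⁻ ω, B.indicator 1 (fun i : Fin n => ω i) * A.indicator 1 (ω k) ∂P := by
    have hres : Measurable fun (ω : ℕ → S) (i : Fin n) => ω i := by fun_prop
    rw [← lintegral_indicator_one ((hres hB).inter (measurable_pi_apply k hA)),
      Set.inter_indicator_one]
    rfl
  have hconst : ∀ k, n ≤ k →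
      ∫⁻ ω, B.indicator 1 (fun i : Fin n => ω i) * κ k (fun i : Fin k => ω i) A ∂P =
        ∫⁻ ω, B.indicator 1 (fun i : Fin n => ω i) * κ n (fun i : Fin n => ω i) A ∂P :=
    Nat.le_induction rfl fun k hnk ih => (hκ.lintegral_mul_succ hP (hB' hnk) hA).trans ih
  calc _ = ∫⁻ ω, B.indicator 1 (fun i : Fin n => ω i) * A.indicator 1 (ω m) ∂P := hind m
    _ = ∫⁻ ω, B.indicator 1 (fun i : Fin n => ω i) * κ m (fun i : Fin m => ω i) A ∂P :=
      lintegral_mul_indicator_coord hP (hB' hnm) hA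
    _ = ∫⁻ ω, B.indicator 1 (fun i : Fin n => ω i) * A.indicator 1 (ω n) ∂P :=
      (hconst m hnm).trans (lintegral_mul_indicator_coord hP (hB' le_rfl) hA).symm
    _ = _ := (hind n).symm

end StrategyLaw

lemma condExp_indicator_ae_eq_of_measure_inter_eq {Ω : Type*} {m m0 : MeasurableSpace Ω}
    {μ : Measure Ω} [IsFiniteMeasure μ] (hm : m ≤ m0) {s t : Set Ω} (hs : MeasurableSet s)
    (ht : MeasurableSet t) (hst : ∀ u, MeasurableSet[m] u → μ (u ∩ s) = μ (u ∩ t)) :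
    μ[s.indicator fun _ => (1 : ℝ) | m] =ᵐ[μ] μ[t.indicator fun _ => (1 : ℝ) | m] := by
  refine ae_eq_condExp_of_forall_setIntegral_eq hm ((integrable_const 1).indicator ht)
    (fun _ _ _ => integrable_condExp.integrableOn) (fun u hu _ => ?_)
    stronglyMeasurable_condExp.aestronglyMeasurable
  rw [setIntegral_condExp hm ((integrable_const 1).indicator hs) hu, setIntegral_indicator hs,
    setIntegral_indicator ht, setIntegral_const, setIntegral_const, measureReal_def,
    measureReal_def, hst u hu]

theorem IsPredictiveMartingale.cid {κ : ∀ n, Kernel (Fin n → S) S} [∀ n, IsSFiniteKernel (κ n)]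
    (hκ : IsPredictiveMartingale κ) {P : Measure (ℕ → S)} [IsFiniteMeasure P]
    (hP : IsStrategyLaw κ P) : CID P (fun n ω => ω n) := by
  refine ⟨?_, fun n m _ hnm A hA => ?_⟩
  · ext A hA
    rw [Measure.map_apply (measurable_pi_apply 1) hA, Measure.map_apply (measurable_pi_apply 0) hA]
    simpa using hκ.measure_restrict_inter_coord_eq hP zero_le_one MeasurableSet.univ hA
  · refine condExp_indicator_ae_eq_of_measure_inter_eq (Measurable.comap_le (by fun_prop))
      (measurable_pi_apply m hA) (measurable_pi_apply n hA) ?_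
    rintro _ ⟨B, hB, rfl⟩
    exact hκ.measure_restrict_inter_coord_eq hP hnm hB hA

lemma isPredictiveMartingale_of_recursive_dirac {q : ∀ n, (Fin n → S) → ℝ}
    (hq01 : ∀ n x, q n x ∈ Set.Icc (0 : ℝ) 1)
    {κ : ∀ n, Kernel (Fin n → S) S} [∀ n, IsMarkovKernel (κ n)]
    (hκ : ∀ n (w : Fin (n + 1) → S),
      κ (n + 1) w = ENNReal.ofReal (q n (Fin.init w)) • κ n (Fin.init w) +
        ENNReal.ofReal (1 - q n (Fin.init w)) • Measure.dirac (w (Fin.last n))) :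
    IsPredictiveMartingale κ := by
  intro n w A hA
  have hq : ENNReal.ofReal (q n w) + ENNReal.ofReal (1 - q n w) = 1 := by
    rw [← ENNReal.ofReal_add (hq01 n w).1 (sub_nonneg.2 (hq01 n w).2)]
    simp
  simp only [hκ, Fin.init_snoc, Fin.snoc_last, Measure.add_apply, Measure.smul_apply, smul_eq_mul,
    Measure.dirac_apply' _ hA]
  rw [lintegral_add_left measurable_const, lintegral_const, measure_univ, mul_one,
    lintegral_const_mul _ (measurable_one.indicator hA), lintegral_indicator_one hA, ← add_mul,
    hq, one_mul]

theorem recursiveDirac_cid_general {S : Type*} [MeasurableSpace S]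
    (q : ∀ n, (Fin n → S) → ℝ)
    (hq01 : ∀ n x, q n x ∈ Set.Icc (0 : ℝ) 1)
    (κ : ∀ n, Kernel (Fin n → S) S) [∀ n, IsMarkovKernel (κ n)]
    (hκ : ∀ n (w : Fin (n + 1) → S),
      κ (n + 1) w = ENNReal.ofReal (q n (Fin.init w)) • κ n (Fin.init w) +
        ENNReal.ofReal (1 - q n (Fin.init w)) • Measure.dirac (w (Fin.last n)))
    (P : Measure (ℕ → S)) [IsProbabilityMeasure P] (hP : IsStrategyLaw κ P) :
    CID P (fun n ω => ω n) :=
  (isPredictiveMartingale_of_recursive_dirac hq01 hκ).cid hP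

/-- **Theorem (recursive update with point masses is c.i.d.).** Let `ν` be a
probability measure and `q_n : Sⁿ → [0,1]` measurable. Let `κ` be the strategy defined
recursively by `σ_0 = ν` and `σ_{n+1}(x, y) = q_n(x) σ_n(x) + (1 - q_n(x)) δ_y`. Then
the coordinate process is c.i.d. under `P_κ`. -/
theorem recursiveDirac_cid {S : Type*} [MeasurableSpace S] [StandardBorelSpace S] [Nonempty S]
    (ν : Measure S) [IsProbabilityMeasure ν]
    (q : ∀ n, (Fin n → S) → ℝ) (hqmeas : ∀ n, Measurable (q n))
    (hq01 : ∀ n x, q n x ∈ Set.Icc (0 : ℝ) 1)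
    (κ : ∀ n, Kernel (Fin n → S) S) [∀ n, IsMarkovKernel (κ n)]
    (hκ0 : ∀ x : Fin 0 → S, κ 0 x = ν)
    (hκ : ∀ n (w : Fin (n + 1) → S),
      κ (n + 1) w = ENNReal.ofReal (q n (Fin.init w)) • κ n (Fin.init w) +
        ENNReal.ofReal (1 - q n (Fin.init w)) • Measure.dirac (w (Fin.last n)))
    (P : Measure (ℕ → S)) [IsProbabilityMeasure P] (hP : IsStrategyLaw κ P) :
    CID P (fun n ω => ω n) :=
  recursiveDirac_cid_general q hq01 κ hκ P hP

end PredictiveBayes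
end
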